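/- Let α = (α_1,...,α_k) be a composition of n and Λ = (λ^{[1]},...,λ^{[k]}) ⊢ α. Then 2·Σ exc(s,π) = (n − m_1(Λ))·(n−1)!·z_Λ, where the sum runs over all pairs (s,π) with s an n-cycle on [n] and π a permutation of [n] of α-type Λ. -/

import Mathlib

open Equiv

/-- The cycle type of a permutation, including fixed points as parts equal to `1`. -/
def fullCycleType {β : Type*} [Fintype β] [DecidableEq β] (σ : Equiv.Perm β) : Multiset ℕ :=
  σ.cycleType + Multiset.replicate (Finset.univ.filter fun x => σ x = x).card 1

/-- The number of cycles (orbits) of a permutation, fixed points counting as 1-cycles. -/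
def numCycles {β : Type*} [Fintype β] [DecidableEq β] (σ : Equiv.Perm β) : ℕ :=
  Multiset.card (fullCycleType σ)

/-- `σ` is a long cycle (an `n`-cycle) on `Fin n`. -/
def IsLongCycle {n : ℕ} (σ : Equiv.Perm (Fin n)) : Prop :=
  fullCycleType σ = {n}

/-- Signless Stirling numbers of the first kind: the number of permutations of an
`N`-element set with exactly `k` cycles (orbits). -/
noncomputable def stirC (N k : ℕ) : ℕ :=
  Nat.card {π : Equiv.Perm (Fin N) // numCycles π = k}

/-- The position of `x` in the list `s_0 = 0, s_1 = s(s_0), s_2 = s(s_1), ...`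
(when `s` is a long cycle, this is the position of `x` in the cycle list of `s`
starting at the element `0`, i.e. the element playing the role of `1 ∈ [n]`). -/
noncomputable def posIn {n : ℕ} [NeZero n] (s : Equiv.Perm (Fin n)) (x : Fin n) : ℕ :=
  sInf {t : ℕ | (s ^ t) 0 = x}

/-- The number of exceedances of the pair `(s, π)` w.r.t. the order `<_s`. -/
noncomputable def exc {n : ℕ} [NeZero n] (s π : Equiv.Perm (Fin n)) : ℕ :=
  Nat.card {x : Fin n // posIn s x < posIn s (π x)}

/-- The number of non-trivial anti-exceedances of the pair `(s, π)` w.r.t. `<_s`: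
elements `x` with `π x ≤_s x` such that `π x` is not the `<_s`-minimum of the
cycle of `π` containing `x`. -/
noncomputable def numNTAE {n : ℕ} [NeZero n] (s π : Equiv.Perm (Fin n)) : ℕ :=
  Nat.card {x : Fin n // posIn s (π x) ≤ posIn s x ∧
    ∃ y : Fin n, π.SameCycle x y ∧ posIn s y < posIn s (π x)}

/-- `kappa μ lam j` : the number of ways of selecting `j` parts of `μ` (parts regarded as
distinguishable) whose replacement by their sum yields `lam`.  Each sub-multiset `S` of `μ`
occurs in `μ.powerset` with multiplicity `∏_v binomial (m_v μ) (m_v S)`. -/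
def kappa (μ lam : Multiset ℕ) (j : ℕ) : ℕ :=
  Multiset.card ((μ.powerset).filter fun S => Multiset.card S = j ∧ (μ - S) + {S.sum} = lam)

/-- `zCount m lam` : the number of permutations of an `m`-element set of cycle type `lam`. -/
noncomputable def zCount (m : ℕ) (lam : Multiset ℕ) : ℕ :=
  Nat.card {π : Equiv.Perm (Fin m) // fullCycleType π = lam}

/-- the start (0-based) of the `i`-th block of the composition `α`. -/
def blockStart {k : ℕ} (α : Fin k → ℕ) (i : Fin k) : ℕ :=
  ∑ t ∈ Finset.univ.filter (fun t => t < i), α t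

/-- `x` (0-based) lies in the `i`-th block of the composition `α`. -/
def InBlock {k : ℕ} (α : Fin k → ℕ) (i : Fin k) (x : ℕ) : Prop :=
  blockStart α i ≤ x ∧ x < blockStart α i + α i

instance {k : ℕ} (α : Fin k → ℕ) (i : Fin k) (x : ℕ) : Decidable (InBlock α i x) :=
  inferInstanceAs (Decidable (_ ∧ _))

/-- `π` is `α`-separated: every cycle (orbit) of `π` is contained in a single block. -/
def SepPerm {n k : ℕ} (α : Fin k → ℕ) (π : Equiv.Perm (Fin n)) : Prop :=
  ∀ x y : Fin n, π.SameCycle x y → ∀ i : Fin k, (InBlock α i x.val ↔ InBlock α i (y.val))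

/-- `π` is `α`-separated of `α`-type `Λ`: `π` preserves every block, and the restriction
of `π` to the `i`-th block has cycle type `Λ i`. -/
def HasSepType {n k : ℕ} (α : Fin k → ℕ) (Λ : Fin k → Multiset ℕ)
    (π : Equiv.Perm (Fin n)) : Prop :=
  ∃ h : ∀ (i : Fin k) (x : Fin n), InBlock α i x.val ↔ InBlock α i (π x).val,
    ∀ i : Fin k, fullCycleType (π.subtypePerm (p := fun x : Fin n => InBlock α i x.val) (fun x => (h i x).symm)) = Λ i

/-- `π` is `α`-separated and for each `i` the elements of the `i`-th block lie in exactly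
`d i` cycles of `π`. -/
def HasSepCounts {n k : ℕ} (α : Fin k → ℕ) (d : Fin k → ℕ)
    (π : Equiv.Perm (Fin n)) : Prop :=
  ∃ h : ∀ (i : Fin k) (x : Fin n), InBlock α i x.val ↔ InBlock α i (π x).val,
    ∀ i : Fin k, numCycles (π.subtypePerm (p := fun x : Fin n => InBlock α i x.val) (fun x => (h i x).symm)) = d i

/-- `p^{(n)}_α` : the number of ordered pairs of long cycles whose product is `α`-separated. -/
noncomputable def pSep (n : ℕ) {k : ℕ} (α : Fin k → ℕ) : ℕ :=
  Nat.card {uv : Equiv.Perm (Fin n) × Equiv.Perm (Fin n) //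
    IsLongCycle uv.1 ∧ IsLongCycle uv.2 ∧ SepPerm α (uv.1 * uv.2)}

/-- `p^{(n)}_Λ` : the number of ordered pairs of long cycles whose product has `α`-type `Λ`. -/
noncomputable def pSepType (n : ℕ) {k : ℕ} (α : Fin k → ℕ) (Λ : Fin k → Multiset ℕ) : ℕ :=
  Nat.card {uv : Equiv.Perm (Fin n) × Equiv.Perm (Fin n) //
    IsLongCycle uv.1 ∧ IsLongCycle uv.2 ∧ HasSepType α Λ (uv.1 * uv.2)}

/-- `p^{(n)}_{α,d}` : the number of ordered pairs of long cycles whose product is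
`α`-separated with the elements of the `i`-th block lying in exactly `d i` cycles. -/
noncomputable def pSepCount (n : ℕ) {k : ℕ} (α d : Fin k → ℕ) : ℕ :=
  Nat.card {uv : Equiv.Perm (Fin n) × Equiv.Perm (Fin n) //
    IsLongCycle uv.1 ∧ IsLongCycle uv.2 ∧ HasSepCounts α d (uv.1 * uv.2)}

/-- `p^η_λ` : the number of pairs `(s, π)` with `s` a long cycle, `π` of cycle type `λ`
and `s π⁻¹` of cycle type `η`. -/
noncomputable def pEtaLam (n : ℕ) (lam eta : Nat.Partition n) : ℕ :=
  Nat.card {sp : Equiv.Perm (Fin n) × Equiv.Perm (Fin n) //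
    IsLongCycle sp.1 ∧ fullCycleType sp.2 = lam.parts ∧
      fullCycleType (sp.1 * sp.2⁻¹) = eta.parts}

/-- `p^η_{λ,a}` : as `pEtaLam`, refined by the number of exceedances of `(s, π)`. -/
noncomputable def pEtaLamA (n : ℕ) [NeZero n] (lam eta : Nat.Partition n) (a : ℕ) : ℕ :=
  Nat.card {sp : Equiv.Perm (Fin n) × Equiv.Perm (Fin n) //
    IsLongCycle sp.1 ∧ fullCycleType sp.2 = lam.parts ∧
      fullCycleType (sp.1 * sp.2⁻¹) = eta.parts ∧ exc sp.1 sp.2 = a}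

/-- `p^{(n)}_λ` : the number of pairs `(s, π)` with `s` a long cycle, `π` of cycle type
`lam` and `s π⁻¹` a long cycle. -/
noncomputable def pLong (n : ℕ) (lam : Multiset ℕ) : ℕ :=
  Nat.card {sp : Equiv.Perm (Fin n) × Equiv.Perm (Fin n) //
    IsLongCycle sp.1 ∧ fullCycleType sp.2 = lam ∧ IsLongCycle (sp.1 * sp.2⁻¹)}

/-!
Reversing a long cycle `s` reverses the order `<_s` on everything except its minimum `0`, so
a non-fixed point of `π` is an exceedance of exactly one of `(s, π)` and `(s⁻¹, π)`; the two
exceptions `x = 0` (an exceedance of both) and `x = π⁻¹ 0` (of neither) cancel, giving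
`exc(s, π) + exc(s⁻¹, π) = n - fix(π)`. As `s ↦ s⁻¹` permutes the `(n-1)!` long cycles,
`2 Σ_s exc(s, π) = (n-1)! (n - fix(π))`. Finally, a permutation of `α`-type `Λ` has
`m_1(Λ)` fixed points, and these permutations are exactly the families of permutations of the
blocks with cycle types `λ^{[i]}`, of which there are `z_Λ`.
-/

open Finset

section FullCycleType

variable {β : Type*} [Fintype β] [DecidableEq β]

lemma fullCycleType_count_one (σ : Perm β) :
    (fullCycleType σ).count 1 = #{x | σ x = x} := by
  have h : σ.cycleType.count 1 = 0 :=
    Multiset.count_eq_zero.2 fun h => by have := Perm.two_le_of_mem_cycleType h; omega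
  simp [fullCycleType, h]

lemma fullCycleType_inv (σ : Perm β) : fullCycleType σ⁻¹ = fullCycleType σ := by
  simp_rw [fullCycleType, Perm.cycleType_inv, Perm.inv_eq_iff_eq, eq_comm]

lemma fullCycleType_permCongr {γ : Type*} [Fintype γ] [DecidableEq γ] (e : β ≃ γ)
    (σ : Perm β) : fullCycleType (e.permCongr σ) = fullCycleType σ := by
  have hfix : #{y | e.permCongr σ y = y} = #{x | σ x = x} :=
    card_bij' (fun y _ => e.symm y) (fun x _ => e x) (by simp [← eq_symm_apply])
      (fun x hx => by rw [mem_filter]; simp_all) (by simp) (by simp)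
  have hext : σ.extendDomain (e.trans (subtypeUnivEquiv fun _ => trivial).symm) =
      e.permCongr σ := by
    ext x
    rw [Perm.extendDomain_apply_subtype σ _ trivial]
    simp [subtypeUnivEquiv]
  rw [fullCycleType, fullCycleType, hfix, ← hext, Perm.cycleType_extendDomain]

lemma fullCycleType_subtypePerm_congr {p q : β → Prop} [DecidablePred p] [DecidablePred q]
    (hpq : ∀ x, p x ↔ q x) (σ : Perm β)
    (hp : ∀ x, p (σ x) ↔ p x) (hq : ∀ x, q (σ x) ↔ q x) :
    fullCycleType (σ.subtypePerm hp) = fullCycleType (σ.subtypePerm hq) := by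
  rw [← fullCycleType_permCongr (subtypeEquivRight hpq)]
  rfl

lemma zCount_eq_card (l : Multiset ℕ) :
    zCount (Fintype.card β) l = Nat.card {σ : Perm β // fullCycleType σ = l} :=
  Nat.card_congr <| (Fintype.equivFin β).symm.permCongr.subtypeEquiv fun σ => by
    rw [fullCycleType_permCongr]

end FullCycleType

section Fibers

variable {β ι : Type*} (f : β → ι)

def fiberPermEquiv : {g : Perm β // f ∘ g = f} ≃ ∀ i, Perm {a // f a = i} :=
  ((DomMulAct.mk.subtypeEquiv fun _ => Iff.rfl).trans MulOpposite.opEquiv).trans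
    (DomMulAct.stabilizerMulEquiv f).toEquiv

lemma fiberPermEquiv_eq_subtypePerm (g : {g : Perm β // f ∘ g = f}) (i : ι) :
    fiberPermEquiv f g i = g.1.subtypePerm (p := fun a => f a = i)
      (fun a => by rw [← Function.comp_apply (f := f), g.2]) := rfl

variable [Fintype β] [DecidableEq β] [Fintype ι] [DecidableEq ι]

lemma card_fixed_eq_sum_fiber (g : {g : Perm β // f ∘ g = f}) :
    #{x | g.1 x = x} = ∑ i, #{a | fiberPermEquiv f g i a = a} := by
  rw [card_eq_sum_card_fiberwise (f := f) (t := univ) (fun _ _ => mem_univ _)]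
  refine sum_congr rfl fun i _ => ?_
  refine card_bij' (fun x hx => ⟨x, (mem_filter.1 hx).2⟩) (fun a _ => a.1) ?_ ?_
    (fun _ _ => rfl) (fun _ _ => rfl)
  · intro x hx
    rw [mem_filter, mem_filter] at hx
    rw [mem_filter, Subtype.ext_iff, fiberPermEquiv_eq_subtypePerm, Perm.subtypePerm_apply]
    exact ⟨mem_univ _, hx.1.2⟩
  · intro a ha
    rw [mem_filter, Subtype.ext_iff, fiberPermEquiv_eq_subtypePerm, Perm.subtypePerm_apply] at ha
    rw [mem_filter, mem_filter]
    exact ⟨⟨mem_univ _, ha.2⟩, a.2⟩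

lemma card_fiberPermEquiv_fullCycleType (Λ : ι → Multiset ℕ) :
    Nat.card {g : {g : Perm β // f ∘ g = f} //
        ∀ i, fullCycleType (fiberPermEquiv f g i) = Λ i} =
      ∏ i, zCount (Fintype.card {a // f a = i}) (Λ i) := by
  rw [Nat.card_congr ((fiberPermEquiv f).subtypeEquiv
      (q := fun G => ∀ i, fullCycleType (G i) = Λ i) fun _ => Iff.rfl),
    Nat.card_congr (Equiv.subtypePiEquivPi (p := fun i σ => fullCycleType σ = Λ i)), Nat.card_pi]
  exact prod_congr rfl fun i _ => (zCount_eq_card _).symm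

end Fibers

section LongCycle

variable {n : ℕ} {s : Perm (Fin n)}

lemma isLongCycle_inv_iff : IsLongCycle s⁻¹ ↔ IsLongCycle s := by
  rw [IsLongCycle, IsLongCycle, fullCycleType_inv]

lemma isLongCycle_iff_cycleType (hn : 2 ≤ n) : IsLongCycle s ↔ s.cycleType = {n} := by
  constructor
  · intro hs
    have hfix : #{x | s x = x} = 0 := by
      rw [← fullCycleType_count_one, hs, Multiset.count_singleton, if_neg (by omega)]
    simpa [IsLongCycle, fullCycleType, hfix] using hs
  · intro h
    have hsupp : s.support = univ := by
      apply eq_univ_of_card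
      rw [← Perm.sum_cycleType, h, Multiset.sum_singleton, Fintype.card_fin]
    have hfix : #{x | s x = x} = 0 := by
      simpa [Finset.eq_univ_iff_forall] using hsupp
    simp [IsLongCycle, fullCycleType, h, hfix]

lemma card_isLongCycle (hn : 2 ≤ n) :
    Nat.card {s : Perm (Fin n) // IsLongCycle s} = (n - 1).factorial := by
  simp_rw [isLongCycle_iff_cycleType hn]
  rw [Nat.card_eq_fintype_card, Fintype.card_subtype, Perm.card_of_cycleType]
  obtain ⟨m, rfl⟩ : ∃ m, n = m + 1 := ⟨n - 1, by omega⟩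
  simp [hn, Nat.factorial_succ]

lemma IsLongCycle.isCycle (hn : 2 ≤ n) (hs : IsLongCycle s) : s.IsCycle := by
  rw [← Perm.card_cycleType_eq_one, (isLongCycle_iff_cycleType hn).1 hs]
  rfl

lemma IsLongCycle.support_eq_univ (hn : 2 ≤ n) (hs : IsLongCycle s) : s.support = univ := by
  apply eq_univ_of_card
  rw [← Perm.sum_cycleType, (isLongCycle_iff_cycleType hn).1 hs, Multiset.sum_singleton,
    Fintype.card_fin]

lemma IsLongCycle.apply_ne (hn : 2 ≤ n) (hs : IsLongCycle s) (x : Fin n) : s x ≠ x :=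
  Perm.mem_support.1 (hs.support_eq_univ hn ▸ mem_univ x)

lemma IsLongCycle.orderOf (hn : 2 ≤ n) (hs : IsLongCycle s) : orderOf s = n := by
  rw [(hs.isCycle hn).orderOf, hs.support_eq_univ hn, card_univ, Fintype.card_fin]

lemma IsLongCycle.pow_eq_one (hn : 2 ≤ n) (hs : IsLongCycle s) : s ^ n = 1 := by
  have h := pow_orderOf_eq_one s
  rwa [hs.orderOf hn] at h

lemma IsLongCycle.eq_of_pow_apply_eq (hn : 2 ≤ n) (hs : IsLongCycle s) {a b : ℕ} (ha : a < n)
    (hb : b < n) (x : Fin n) (h : (s ^ a) x = (s ^ b) x) : a = b := by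
  have hab : s ^ a = s ^ b := (hs.isCycle hn).pow_eq_pow_iff.2 ⟨x, hs.apply_ne hn x, h⟩
  rw [pow_inj_mod, hs.orderOf hn, Nat.mod_eq_of_lt ha, Nat.mod_eq_of_lt hb] at hab
  exact hab

lemma IsLongCycle.exists_pow_apply_eq (hn : 2 ≤ n) (hs : IsLongCycle s) (x y : Fin n) :
    ∃ t < n, (s ^ t) x = y := by
  obtain ⟨t, ht⟩ := (hs.isCycle hn).exists_pow_eq (hs.apply_ne hn x) (hs.apply_ne hn y)
  refine ⟨t % n, Nat.mod_lt _ (by omega), ?_⟩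
  have hmod := pow_mod_orderOf s t
  rw [hs.orderOf hn] at hmod
  rwa [hmod]

end LongCycle

section Position

variable {n : ℕ} [NeZero n] {s : Perm (Fin n)}

lemma posIn_zero (s : Perm (Fin n)) : posIn s 0 = 0 :=
  Nat.eq_zero_of_le_zero (Nat.sInf_le (show (s ^ 0) 0 = 0 from rfl))

lemma posIn_eq_of_pow_apply (hn : 2 ≤ n) (hs : IsLongCycle s) {t : ℕ} {x : Fin n}
    (ht : t < n) (h : (s ^ t) 0 = x) : posIn s x = t := by
  have hle : posIn s x ≤ t := Nat.sInf_le h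
  have hmem : (s ^ posIn s x) 0 = x := Nat.sInf_mem (s := {t | (s ^ t) 0 = x}) ⟨t, h⟩
  exact hs.eq_of_pow_apply_eq hn (hle.trans_lt ht) ht 0 (hmem.trans h.symm)

lemma posIn_spec (hn : 2 ≤ n) (hs : IsLongCycle s) (x : Fin n) :
    posIn s x < n ∧ (s ^ posIn s x) 0 = x := by
  obtain ⟨t, ht, h⟩ := hs.exists_pow_apply_eq hn 0 x
  rw [posIn_eq_of_pow_apply hn hs ht h]
  exact ⟨ht, h⟩

lemma posIn_injective (hn : 2 ≤ n) (hs : IsLongCycle s) : Function.Injective (posIn s) :=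
  fun x y h => by rw [← (posIn_spec hn hs x).2, ← (posIn_spec hn hs y).2, h]

lemma posIn_eq_zero_iff (hn : 2 ≤ n) (hs : IsLongCycle s) {x : Fin n} :
    posIn s x = 0 ↔ x = 0 := by
  rw [← posIn_zero s, (posIn_injective hn hs).eq_iff]

lemma posIn_inv (hn : 2 ≤ n) (hs : IsLongCycle s) (x : Fin n) :
    posIn s⁻¹ x = if posIn s x = 0 then 0 else n - posIn s x := by
  split_ifs with hpos
  · rw [(posIn_eq_zero_iff hn hs).1 hpos, posIn_zero]
  obtain ⟨hlt, hpow⟩ := posIn_spec hn hs x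
  refine posIn_eq_of_pow_apply hn (isLongCycle_inv_iff.2 hs) (by omega) ?_
  rw [inv_pow, Perm.inv_eq_iff_eq]
  nth_rw 2 [← hpow]
  rw [← Perm.mul_apply, ← pow_add, Nat.sub_add_cancel hlt.le,
    hs.pow_eq_one hn, Perm.one_apply]

end Position

section Exceedance

variable {n : ℕ} [NeZero n]

lemma exc_eq_card (s π : Perm (Fin n)) : exc s π = #{x | posIn s x < posIn s (π x)} := by
  rw [exc, Nat.card_eq_fintype_card, Fintype.card_subtype]

lemma exc_indicator_add_exc_inv_indicator {s : Perm (Fin n)} (hn : 2 ≤ n) (hs : IsLongCycle s)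
    (π : Perm (Fin n)) (x : Fin n) :
    (if posIn s x < posIn s (π x) then 1 else 0) +
        (if posIn s⁻¹ x < posIn s⁻¹ (π x) then 1 else 0) +
        (if π x = 0 ∧ π x ≠ x then 1 else 0) + (if π x = x then 1 else 0) =
      1 + if x = 0 ∧ π x ≠ x then 1 else 0 := by
  by_cases hfix : π x = x
  · simp [hfix]
  have hne : posIn s x ≠ posIn s (π x) := (posIn_injective hn hs).ne (Ne.symm hfix)
  have hxn := (posIn_spec hn hs x).1
  have hπxn := (posIn_spec hn hs (π x)).1
  simp only [posIn_inv hn hs, ← posIn_eq_zero_iff hn hs, ne_eq, hfix, not_false_eq_true,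
    and_true, if_false]
  split_ifs <;> omega

lemma exc_add_exc_inv {s : Perm (Fin n)} (hn : 2 ≤ n) (hs : IsLongCycle s) (π : Perm (Fin n)) :
    exc s π + exc s⁻¹ π + #{x | π x = x} = n := by
  have hzero : ∑ x, (if π x = 0 ∧ π x ≠ x then 1 else 0) =
      ∑ x, (if x = 0 ∧ π x ≠ x then 1 else 0) := by
    rw [← Equiv.sum_comp π (fun y => if y = 0 ∧ π y ≠ y then 1 else 0)]
    simp only [π.injective.ne_iff]
  have h := Finset.sum_congr rfl fun x (_ : x ∈ univ) =>
    exc_indicator_add_exc_inv_indicator hn hs π x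
  simp only [sum_add_distrib, hzero, sum_const, card_univ, Fintype.card_fin, smul_eq_mul,
    mul_one, ← card_filter, ← exc_eq_card] at h
  omega

open scoped Classical in
lemma two_mul_sum_exc (π : Perm (Fin n)) :
    2 * ∑ s : Perm (Fin n), (if IsLongCycle s then exc s π else 0) =
      (n - 1).factorial * (n - #{x | π x = x}) := by
  rcases eq_or_ne π 1 with rfl | hπ
  · simp [exc]
  have hn : 2 ≤ n := by
    by_contra! h
    have := Fin.subsingleton_iff_le_one.2 (by omega : n ≤ 1)
    exact hπ (Subsingleton.elim _ _)
  have hinv : ∑ s : Perm (Fin n), (if IsLongCycle s then exc s π else 0) =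
      ∑ s : Perm (Fin n), (if IsLongCycle s then exc s⁻¹ π else 0) := by
    rw [← Equiv.sum_comp (Equiv.inv (Perm (Fin n)))]
    simp only [Equiv.inv_apply, isLongCycle_inv_iff]
  calc 2 * ∑ s : Perm (Fin n), (if IsLongCycle s then exc s π else 0)
      = ∑ s : Perm (Fin n), if IsLongCycle s then exc s π + exc s⁻¹ π else 0 := by
        rw [two_mul]
        nth_rw 2 [hinv]
        rw [← sum_add_distrib]
        exact sum_congr rfl fun s _ => by split_ifs <;> rfl
    _ = ∑ s : Perm (Fin n), if IsLongCycle s then n - #{x | π x = x} else 0 := by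
        refine sum_congr rfl fun s _ => ?_
        split_ifs with hs
        · have := exc_add_exc_inv hn hs π; omega
        · rfl
    _ = (n - 1).factorial * (n - #{x | π x = x}) := by
        rw [← sum_filter, sum_const, smul_eq_mul, ← Fintype.card_subtype,
          ← Nat.card_eq_fintype_card, card_isLongCycle hn]

end Exceedance

section Blocks

variable {n k : ℕ} {α : Fin k → ℕ}

lemma blockStart_add_self (α : Fin k → ℕ) (i : Fin k) :
    blockStart α i + α i = ∑ t ∈ Iic i, α t := by
  rw [← Iio_insert, sum_insert (by simp), add_comm, blockStart]
  congr 2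
  ext; simp

lemma blockStart_add_le_blockStart {i j : Fin k} (hij : i < j) :
    blockStart α i + α i ≤ blockStart α j := by
  rw [blockStart_add_self, blockStart]
  exact sum_le_sum_of_subset fun t ht => by
    simpa only [mem_filter, mem_univ, true_and] using (mem_Iic.1 ht).trans_lt hij

lemma blockStart_add_le (hsum : ∑ i, α i = n) (i : Fin k) : blockStart α i + α i ≤ n :=
  hsum ▸ blockStart_add_self α i ▸ sum_le_sum_of_subset (subset_univ _)

lemma InBlock.unique {i j : Fin k} {x : ℕ} (hi : InBlock α i x) (hj : InBlock α j x) :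
    i = j := by
  by_contra hne
  unfold InBlock at hi hj
  rcases lt_or_gt_of_ne hne with h | h
  · have := blockStart_add_le_blockStart (α := α) h; omega
  · have := blockStart_add_le_blockStart (α := α) h; omega

lemma card_inBlock (hsum : ∑ i, α i = n) (i : Fin k) : #{x : Fin n | InBlock α i x} = α i := by
  have hle := blockStart_add_le hsum i
  calc #{x : Fin n | InBlock α i x}
      = #((Ico (blockStart α i) (blockStart α i + α i)).attachFin (n := n)
          fun m hm => (mem_Ico.1 hm).2.trans_le hle) := by
        apply congr_arg
        ext x
        rw [mem_filter]
        simp [InBlock]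
    _ = α i := by simp

lemma exists_inBlock (hsum : ∑ i, α i = n) (x : Fin n) : ∃ i, InBlock α i x := by
  have hcover : univ.biUnion (fun i => ({x : Fin n | InBlock α i x} : Finset _)) = univ := by
    refine eq_univ_of_card _ ?_
    rw [card_biUnion, Fintype.card_fin]
    · rw [sum_congr rfl fun i _ => card_inBlock hsum i, hsum]
    · intro i _ j _ hij
      exact disjoint_filter.2 fun x _ hi hj => hij (hi.unique hj)
  obtain ⟨i, -, hi⟩ := mem_biUnion.1 (hcover.symm ▸ mem_univ x)
  exact ⟨i, (mem_filter.1 hi).2⟩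

noncomputable def blockIdx (hsum : ∑ i, α i = n) (x : Fin n) : Fin k :=
  (exists_inBlock hsum x).choose

lemma blockIdx_eq_iff {hsum : ∑ i, α i = n} {x : Fin n} {i : Fin k} :
    blockIdx hsum x = i ↔ InBlock α i x :=
  ⟨fun h => h ▸ (exists_inBlock hsum x).choose_spec,
    fun h => (exists_inBlock hsum x).choose_spec.unique h⟩

lemma card_blockIdx_fiber (hsum : ∑ i, α i = n) (i : Fin k) :
    Fintype.card {x // blockIdx hsum x = i} = α i := by
  rw [Fintype.card_subtype, ← card_inBlock hsum i]
  simp_rw [blockIdx_eq_iff]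

lemma hasSepType_iff (hsum : ∑ i, α i = n) {Λ : Fin k → Multiset ℕ} {π : Perm (Fin n)} :
    HasSepType α Λ π ↔ ∃ h : blockIdx hsum ∘ π = blockIdx hsum,
      ∀ i, fullCycleType (fiberPermEquiv (blockIdx hsum) ⟨π, h⟩ i) = Λ i := by
  have hpres : blockIdx hsum ∘ π = blockIdx hsum ↔
      ∀ i (x : Fin n), InBlock α i x ↔ InBlock α i (π x) := by
    simp only [← blockIdx_eq_iff (hsum := hsum), funext_iff, Function.comp_apply]
    exact ⟨fun h i x => by rw [h], fun h x => (h _ x).1 rfl⟩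
  constructor
  · rintro ⟨h, hΛ⟩
    refine ⟨hpres.2 h, fun i => ?_⟩
    rw [← hΛ i, fiberPermEquiv_eq_subtypePerm]
    exact fullCycleType_subtypePerm_congr (p := fun x => blockIdx hsum x = i)
      (fun _ => blockIdx_eq_iff) π _ _
  · rintro ⟨h, hΛ⟩
    refine ⟨hpres.1 h, fun i => ?_⟩
    rw [← hΛ i, fiberPermEquiv_eq_subtypePerm]
    exact fullCycleType_subtypePerm_congr (q := fun x => blockIdx hsum x = i)
      (fun _ => blockIdx_eq_iff.symm) π _ _

lemma card_hasSepType (hsum : ∑ i, α i = n) (Λ : Fin k → Multiset ℕ) :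
    Nat.card {π : Perm (Fin n) // HasSepType α Λ π} = ∏ i, zCount (α i) (Λ i) := by
  simp_rw [hasSepType_iff hsum]
  rw [← Nat.card_congr (subtypeSubtypeEquivSubtypeExists
      (fun π : Perm (Fin n) => blockIdx hsum ∘ π = blockIdx hsum)
      fun g => ∀ i, fullCycleType (fiberPermEquiv (blockIdx hsum) g i) = Λ i),
    card_fiberPermEquiv_fullCycleType]
  simp_rw [card_blockIdx_fiber hsum]

lemma card_fixed_of_hasSepType (hsum : ∑ i, α i = n) {Λ : Fin k → Multiset ℕ} {π : Perm (Fin n)}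
    (hπ : HasSepType α Λ π) : #{x | π x = x} = ∑ i, (Λ i).count 1 := by
  obtain ⟨h, hΛ⟩ := (hasSepType_iff hsum).1 hπ
  rw [card_fixed_eq_sum_fiber _ ⟨π, h⟩]
  simp_rw [← hΛ, fullCycleType_count_one]

end Blocks

open scoped Classical in
theorem stmt13_general (n k : ℕ) [NeZero n] (α : Fin k → ℕ)
    (hsum : ∑ i, α i = n) (Λ : Fin k → Multiset ℕ) :
    2 * ∑ s : Equiv.Perm (Fin n), ∑ π : Equiv.Perm (Fin n),
        (if IsLongCycle s ∧ HasSepType α Λ π then exc s π else 0)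
      = (n - ∑ i, (Λ i).count 1) * (n - 1).factorial * ∏ i, zCount (α i) (Λ i) := by
  have hinner : ∀ π : Perm (Fin n),
      2 * ∑ s : Perm (Fin n), (if IsLongCycle s ∧ HasSepType α Λ π then exc s π else 0) =
        if HasSepType α Λ π then (n - ∑ i, (Λ i).count 1) * (n - 1).factorial else 0 := by
    intro π
    split_ifs with h
    · simp only [h, and_true]
      rw [two_mul_sum_exc, card_fixed_of_hasSepType hsum h, mul_comm]
    · simp [h]
  rw [sum_comm, mul_sum, sum_congr rfl fun π _ => hinner π, ← sum_filter, sum_const, smul_eq_mul,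
    ← Fintype.card_subtype, ← Nat.card_eq_fintype_card, card_hasSepType hsum, mul_comm]

open scoped Classical in
/-- `2 Σ exc(s,π) = (n - m_1(Λ)) (n-1)! z_Λ`, the sum over pairs `(s,π)` with
`s` a long cycle and `π` of `α`-type `Λ`. -/
theorem stmt13 (n k : ℕ) [NeZero n] (α : Fin k → ℕ) (hpos : ∀ i, 0 < α i)
    (hsum : ∑ i, α i = n) (Λ : Fin k → Multiset ℕ)
    (hΛpos : ∀ i, ∀ x ∈ Λ i, 0 < x) (hΛsum : ∀ i, (Λ i).sum = α i) :
    2 * ∑ s : Equiv.Perm (Fin n), ∑ π : Equiv.Perm (Fin n),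
        (if IsLongCycle s ∧ HasSepType α Λ π then exc s π else 0)
      = (n - ∑ i, (Λ i).count 1) * (n - 1).factorial * ∏ i, zCount (α i) (Λ i) :=
  stmt13_general n k α hsum Λ
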